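/- Let Q, V, W be finite-dimensional real inner product spaces, d₋ : Q → V and d : V → W linear maps with d ∘ d₋ = 0 and range d₋ = ker d (exactness at V), and let Π : V → V be the orthogonal projection onto range d₋. Then for every α > 0 the operator V̄ = (1+α)⁻¹·Π + d† ∘ d on V is symmetric positive definite (hence invertible), and for every q ∈ Q: ⟨V̄⁻¹(d₋ q), d₋ q⟩ = (1+α)·‖d₋ q‖². Consequently, the flipped fitted Q-norm α‖q‖² + ⟨V̄⁻¹(d₋ q), d₋ q⟩ equals α‖q‖² + (1+α)‖d₋ q‖². -/

import Mathlib

open scoped RealInnerProductSpace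

/-- The orthogonal projection onto `range d₋`, as a linear map `V →ₗ[ℝ] V`. -/
noncomputable def rangeProj {Q V : Type*}
    [NormedAddCommGroup Q] [InnerProductSpace ℝ Q] [FiniteDimensional ℝ Q]
    [NormedAddCommGroup V] [InnerProductSpace ℝ V] [FiniteDimensional ℝ V]
    (dm : Q →ₗ[ℝ] V) : V →ₗ[ℝ] V :=
  ((LinearMap.range dm).subtypeL.comp (Submodule.orthogonalProjection (LinearMap.range dm))).toLinearMap

/-- The flipped fitting operator `V̄ = (1+α)⁻¹·Π + d† ∘ d` on `V`. -/
noncomputable def flippedOp {Q V W : Type*}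
    [NormedAddCommGroup Q] [InnerProductSpace ℝ Q] [FiniteDimensional ℝ Q]
    [NormedAddCommGroup V] [InnerProductSpace ℝ V] [FiniteDimensional ℝ V]
    [NormedAddCommGroup W] [InnerProductSpace ℝ W] [FiniteDimensional ℝ W]
    (dm : Q →ₗ[ℝ] V) (d : V →ₗ[ℝ] W) (α : ℝ) : V →ₗ[ℝ] V :=
  (1 + α)⁻¹ • rangeProj dm + (LinearMap.adjoint d) ∘ₗ d

/-- **The flipped fitting operator is SPD and the flipped fitted `Q`-norm simplifies:**
for an exact complex and `α > 0`, `V̄ = (1+α)⁻¹·Π + d†∘d` is symmetric positive definite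
(hence bijective), and `⟪V̄⁻¹(d₋ q), d₋ q⟫ = (1+α)‖d₋ q‖²` for every `q`; consequently
`α‖q‖² + ⟪V̄⁻¹(d₋ q), d₋ q⟫ = α‖q‖² + (1+α)‖d₋ q‖²`. -/
theorem flipped_op_spd_and_Qnorm
    {Q V W : Type*}
    [NormedAddCommGroup Q] [InnerProductSpace ℝ Q] [FiniteDimensional ℝ Q]
    [NormedAddCommGroup V] [InnerProductSpace ℝ V] [FiniteDimensional ℝ V]
    [NormedAddCommGroup W] [InnerProductSpace ℝ W] [FiniteDimensional ℝ W]
    (dm : Q →ₗ[ℝ] V) (d : V →ₗ[ℝ] W)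
    (hcomplex : d ∘ₗ dm = 0)
    (hexact : LinearMap.range dm = LinearMap.ker d)
    (α : ℝ) (hα : 0 < α) :
    (∀ u v : V, ⟪flippedOp dm d α u, v⟫ = ⟪u, flippedOp dm d α v⟫) ∧
    (∀ v : V, v ≠ 0 → 0 < ⟪flippedOp dm d α v, v⟫) ∧
    Function.Bijective (flippedOp dm d α) ∧
    (∀ q : Q, ⟪Function.invFun (flippedOp dm d α) (dm q), dm q⟫ = (1 + α) * ‖dm q‖ ^ 2) ∧
    (∀ q : Q, α * ‖q‖ ^ 2 + ⟪Function.invFun (flippedOp dm d α) (dm q), dm q⟫ =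
      α * ‖q‖ ^ 2 + (1 + α) * ‖dm q‖ ^ 2) := by

  have hα1 : (0:ℝ) < 1 + α := by linarith
  have hα1' : (1:ℝ) + α ≠ 0 := ne_of_gt hα1
  set K := LinearMap.range dm with hK
  have hP : ∀ v : V, rangeProj dm v = K.starProjection v := fun v => rfl
  -- symmetry
  have hsym : ∀ u v : V, ⟪flippedOp dm d α u, v⟫ = ⟪u, flippedOp dm d α v⟫ := by
    intro u v
    simp only [flippedOp, LinearMap.add_apply, LinearMap.smul_apply, LinearMap.comp_apply,
      inner_add_left, inner_add_right, real_inner_smul_left, real_inner_smul_right]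
    rw [hP, hP, Submodule.inner_starProjection_left_eq_right, LinearMap.adjoint_inner_left,
      LinearMap.adjoint_inner_right]
  -- positivity helper
  have hval : ∀ v : V, ⟪flippedOp dm d α v, v⟫
      = (1 + α)⁻¹ * ‖K.starProjection v‖ ^ 2 + ‖d v‖ ^ 2 := by
    intro v
    have h1 : ⟪K.starProjection v, v⟫ = ‖K.starProjection v‖ ^ 2 := by
      have hperp := Submodule.sub_starProjection_mem_orthogonal (K := K) v
      have := hperp (K.starProjection v) (K.starProjection_apply_mem v)
      have h2 : ⟪K.starProjection v, v - K.starProjection v⟫ = 0 := this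
      have := inner_sub_right (𝕜 := ℝ) (K.starProjection v) v
        (K.starProjection v)
      rw [real_inner_self_eq_norm_sq] at this
      linarith [this, h2]
    simp only [flippedOp, LinearMap.add_apply, LinearMap.smul_apply, LinearMap.comp_apply,
      inner_add_left, real_inner_smul_left]
    rw [hP, h1, LinearMap.adjoint_inner_left, real_inner_self_eq_norm_sq]
  have hpos : ∀ v : V, v ≠ 0 → 0 < ⟪flippedOp dm d α v, v⟫ := by
    intro v hv
    rw [hval v]
    rcases eq_or_ne (d v) 0 with hdv | hdv
    · have hvK : v ∈ K := hexact ▸ (LinearMap.mem_ker.2 hdv)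
      have : K.starProjection v = v := Submodule.starProjection_eq_self_iff.2 hvK
      rw [this, hdv]
      have hv2 : 0 < ‖v‖ ^ 2 := pow_pos (norm_pos_iff.2 hv) 2
      have : (0:ℝ) < (1 + α)⁻¹ * ‖v‖ ^ 2 := by positivity
      simpa using this
    · have h1 : 0 ≤ (1 + α)⁻¹ * ‖K.starProjection v‖ ^ 2 := by positivity
      have h2 : 0 < ‖d v‖ ^ 2 := by
        have : ‖d v‖ ≠ 0 := norm_ne_zero_iff.2 hdv
        positivity
      linarith
  have hinj : Function.Injective (flippedOp dm d α) := by
    rw [← LinearMap.ker_eq_bot, LinearMap.ker_eq_bot']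
    intro v hv
    by_contra hvne
    have := hpos v hvne
    rw [hv] at this
    simp at this
  have hbij : Function.Bijective (flippedOp dm d α) :=
    ⟨hinj, (LinearMap.injective_iff_surjective).1 hinj⟩
  -- value of the operator on range
  have hop : ∀ q : Q, flippedOp dm d α ((1 + α) • dm q) = dm q := by
    intro q
    have hdm0 : d (dm q) = 0 := by
      have := LinearMap.congr_fun hcomplex q
      simpa using this
    have hmem : dm q ∈ K := LinearMap.mem_range_self dm q
    have hproj : K.starProjection (dm q) = dm q :=
      Submodule.starProjection_eq_self_iff.2 hmem
    simp only [flippedOp, LinearMap.add_apply, LinearMap.smul_apply, LinearMap.comp_apply,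
      map_smul]
    rw [hP, hproj, hdm0, map_zero, add_zero, smul_smul, mul_inv_cancel₀ hα1', one_smul]
  have hinv : ∀ q : Q, Function.invFun (flippedOp dm d α) (dm q) = (1 + α) • dm q := by
    intro q
    have := Function.leftInverse_invFun hinj ((1 + α) • dm q)
    rw [hop q] at this
    exact this
  have hQ : ∀ q : Q, ⟪Function.invFun (flippedOp dm d α) (dm q), dm q⟫
      = (1 + α) * ‖dm q‖ ^ 2 := by
    intro q
    rw [hinv q, real_inner_smul_left, real_inner_self_eq_norm_sq]
  exact ⟨hsym, hpos, hbij, hQ, fun q => by rw [hQ q]⟩
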